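/- arXiv:1901.09477 — 5 statements merged into one kernel-verified Lean document; each statement's English description precedes it below -/
import Mathlib

section
/- Define Q(f,g) = ∫_{-1}^{1} f(g⁻¹(t)) dt for f, g ∈ G₀, where G₀ = {f ∈ G : ∫_{-1}^{1} f = 0}. Then Q(g,f) = -Q(f,g) and Q(f,g) = Q(g*,f*) where f*(t) = -f(-t). In particular Q(f,f) = 0, and Q(f,g) = 0 whenever f and g are both odd elements of G. -/
/-- `f*(t) = -f(-t)`. -/
def negConj (f : ℝ → ℝ) : ℝ → ℝ := fun t => -f (-t)

/-- An orientation-preserving homeomorphism of `[-1,1]`. -/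
def IsHPM (f : ℝ → ℝ) : Prop :=
  ContinuousOn f (Set.Icc (-1) 1) ∧ StrictMonoOn f (Set.Icc (-1) 1) ∧
    Set.MapsTo f (Set.Icc (-1) 1) (Set.Icc (-1) 1) ∧ f (-1) = -1 ∧ f 1 = 1

/-!
For an increasing bijection `h : [a, b] → [c, d]`, counting the area above the graph of `h` by
vertical and by horizontal slices gives `∫ h + ∫ h⁻¹ = b d - a c`. Applied to `h = g ∘ f⁻¹`,
whose inverse is `f ∘ g⁻¹`, this is `Q(g, f) + Q(f, g) = 0`. Conjugation by `t ↦ -t` turns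
`Q(g, f)` into `-Q(g*, f*)`, and `*` fixes odd `f`, `g` and hence `f⁻¹`.
-/

open MeasureTheory Set

theorem MonotoneOn.strictMonoOn_of_rightInvOn {α β : Type*} [LinearOrder α] [LinearOrder β]
    {h : α → β} {g : β → α} {s : Set α} {t : Set β} (hh : MonotoneOn h s)
    (hg : MapsTo g t s) (hgh : RightInvOn g h t) : StrictMonoOn g t := by
  intro x hx y hy hxy
  by_contra! hle
  have := hh (hg hy) (hg hx) hle
  rw [hgh hx, hgh hy] at this
  exact hxy.not_ge this

section IntegralOfInverse

variable {a b c d : ℝ} {h g : ℝ → ℝ}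

theorem measurableSet_regionBetween_Ioo_of_monotoneOn (hab : a ≤ b)
    (hh : MonotoneOn h (Icc a b)) {u : ℝ → ℝ} (hu : Measurable u) :
    MeasurableSet (regionBetween h u (Ioo a b)) := by
  have hH : Monotone fun x => h (projIcc a b hab x) := fun x y hxy =>
    hh (projIcc a b hab x).2 (projIcc a b hab y).2 (monotone_projIcc hab hxy)
  convert measurableSet_regionBetween hH.measurable hu measurableSet_Ioo using 1
  ext ⟨x, y⟩
  refine and_congr_right fun (hx : x ∈ Ioo a b) => ?_
  simp only [projIcc_of_mem hab (Ioo_subset_Icc_self hx)]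

theorem volume_preimage_prodMk_right_regionBetween (hh : StrictMonoOn h (Icc a b))
    (hh_maps : MapsTo h (Icc a b) (Icc c d)) (hg_maps : MapsTo g (Icc c d) (Icc a b))
    (hgh : RightInvOn g h (Icc c d)) (y : ℝ) :
    volume ((fun x => (x, y)) ⁻¹' regionBetween h (fun _ => d) (Ioo a b)) =
      (Ioo c d).indicator (fun y => ENNReal.ofReal (g y - a)) y := by
  by_cases hy : y ∈ Ioo c d
  · have hgy := hg_maps (Ioo_subset_Icc_self hy)
    have : (fun x => (x, y)) ⁻¹' regionBetween h (fun _ => d) (Ioo a b) = Ioo a (g y) := by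
      ext x
      simp only [regionBetween, mem_preimage, mem_ofPred_eq, mem_Ioo]
      constructor
      · rintro ⟨hx, hxy, -⟩
        rw [← hgh (Ioo_subset_Icc_self hy)] at hxy
        exact ⟨hx.1, (hh.lt_iff_lt (Ioo_subset_Icc_self hx) hgy).1 hxy⟩
      · rintro ⟨hax, hxg⟩
        have hx : x ∈ Ioo a b := ⟨hax, hxg.trans_le hgy.2⟩
        refine ⟨hx, ?_, hy.2⟩
        rw [← hgh (Ioo_subset_Icc_self hy)]
        exact hh (Ioo_subset_Icc_self hx) hgy hxg
    rw [this, Real.volume_Ioo, indicator_of_mem hy]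
  · have : (fun x => (x, y)) ⁻¹' regionBetween h (fun _ => d) (Ioo a b) = ∅ := by
      ext x
      simp only [regionBetween, mem_preimage, mem_ofPred_eq, mem_Ioo, mem_empty_iff_false,
        iff_false, not_and]
      exact fun hx hxy hyd => hy ⟨(hh_maps (Ioo_subset_Icc_self hx)).1.trans_lt hxy, hyd⟩
    rw [this, measure_empty, indicator_of_notMem hy]

theorem lintegral_ofReal_sub_eq_of_rightInvOn (hab : a ≤ b) (hh : StrictMonoOn h (Icc a b))
    (hh_maps : MapsTo h (Icc a b) (Icc c d)) (hg_maps : MapsTo g (Icc c d) (Icc a b))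
    (hgh : RightInvOn g h (Icc c d)) :
    ∫⁻ x in Ioo a b, ENNReal.ofReal (d - h x) = ∫⁻ y in Ioo c d, ENNReal.ofReal (g y - a) := by
  calc ∫⁻ x in Ioo a b, ENNReal.ofReal (d - h x)
      = volume (regionBetween h (fun _ => d) (Ioo a b)) := by
        rw [Measure.volume_eq_prod, volume_regionBetween_eq_lintegral
          (aemeasurable_restrict_of_monotoneOn measurableSet_Ioo
            (hh.monotoneOn.mono Ioo_subset_Icc_self)) aemeasurable_const measurableSet_Ioo]
        rfl
    _ = ∫⁻ y in Ioo c d, ENNReal.ofReal (g y - a) := by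
        rw [Measure.volume_eq_prod, Measure.prod_apply_symm
          (measurableSet_regionBetween_Ioo_of_monotoneOn hab hh.monotoneOn measurable_const),
          ← lintegral_indicator measurableSet_Ioo]
        simp only [volume_preimage_prodMk_right_regionBetween hh hh_maps hg_maps hgh]

theorem StrictMonoOn.intervalIntegral_add_intervalIntegral_of_rightInvOn (hab : a ≤ b)
    (hh : StrictMonoOn h (Icc a b)) (hh_maps : MapsTo h (Icc a b) (Icc c d))
    (hg_maps : MapsTo g (Icc c d) (Icc a b)) (hgh : RightInvOn g h (Icc c d)) :
    (∫ x in a..b, h x) + ∫ y in c..d, g y = b * d - a * c := by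
  have hcd : c ≤ d := (hh_maps (left_mem_Icc.2 hab)).1.trans (hh_maps (left_mem_Icc.2 hab)).2
  have hh_int : IntervalIntegrable h volume a b :=
    MonotoneOn.intervalIntegrable (by rw [uIcc_of_le hab]; exact hh.monotoneOn)
  have hg_int : IntervalIntegrable g volume c d :=
    MonotoneOn.intervalIntegrable (by
      rw [uIcc_of_le hcd]; exact (hh.monotoneOn.strictMonoOn_of_rightInvOn hg_maps hgh).monotoneOn)
  have area : ∫ x in a..b, (d - h x) = ∫ y in c..d, (g y - a) := by
    rw [intervalIntegral.integral_of_le hab, intervalIntegral.integral_of_le hcd,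
      integral_Ioc_eq_integral_Ioo, integral_Ioc_eq_integral_Ioo,
      integral_eq_lintegral_of_nonneg_ae, integral_eq_lintegral_of_nonneg_ae,
      lintegral_ofReal_sub_eq_of_rightInvOn hab hh hh_maps hg_maps hgh]
    · exact (ae_restrict_iff' measurableSet_Ioo).2 <| .of_forall fun y hy =>
        sub_nonneg.2 (hg_maps (Ioo_subset_Icc_self hy)).1
    · exact ((hg_int.1.mono_set Ioo_subset_Ioc_self).sub (integrableOn_const (by simp))).1
    · exact (ae_restrict_iff' measurableSet_Ioo).2 <| .of_forall fun x hx =>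
        sub_nonneg.2 (hh_maps (Ioo_subset_Icc_self hx)).2
    · exact ((integrableOn_const (by simp)).sub (hh_int.1.mono_set Ioo_subset_Ioc_self)).1
  rw [intervalIntegral.integral_sub intervalIntegrable_const hh_int,
    intervalIntegral.integral_sub hg_int intervalIntegrable_const,
    intervalIntegral.integral_const, intervalIntegral.integral_const, smul_eq_mul,
    smul_eq_mul] at area
  linarith

end IntegralOfInverse

theorem intervalIntegral_comp_add_intervalIntegral_comp_of_invOn {a b : ℝ} {f g finv ginv : ℝ → ℝ}
    (hab : a ≤ b) (hf : MonotoneOn f (Icc a b)) (hg : StrictMonoOn g (Icc a b))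
    (hg_maps : MapsTo g (Icc a b) (Icc a b)) (hf_maps : MapsTo f (Icc a b) (Icc a b))
    (hfinv : InvOn finv f (Icc a b) (Icc a b)) (hginv : RightInvOn ginv g (Icc a b))
    (hfinv_maps : MapsTo finv (Icc a b) (Icc a b)) (hginv_maps : MapsTo ginv (Icc a b) (Icc a b)) :
    (∫ x in a..b, g (finv x)) + ∫ x in a..b, f (ginv x) = b * b - a * a :=
  StrictMonoOn.intervalIntegral_add_intervalIntegral_of_rightInvOn hab
    (hg.comp (hf.strictMonoOn_of_rightInvOn hfinv_maps hfinv.2) hfinv_maps)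
    (hg_maps.comp hfinv_maps) (hf_maps.comp hginv_maps) (RightInvOn.comp hfinv.1 hginv hginv_maps)

theorem intervalIntegral_negConj_comp_negConj (u v : ℝ → ℝ) (a : ℝ) :
    ∫ x in -a..a, negConj u (negConj v x) = -∫ x in -a..a, u (v x) := by
  simp only [negConj, neg_neg, intervalIntegral.integral_neg]
  rw [intervalIntegral.integral_comp_neg (fun x => u (v x)), neg_neg]

theorem Set.InvOn.apply_neg_of_odd {α β : Type*} [Neg α] [Neg β] {f : α → β} {finv : β → α}
    {s : Set α} {t : Set β} (hf : ∀ x, f (-x) = -f x) (hs : ∀ x ∈ s, -x ∈ s)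
    (hfinv : InvOn finv f s t) (hfinv_maps : MapsTo finv t s) {y : β} (hy : y ∈ t) :
    finv (-y) = -finv y := by
  calc finv (-y) = finv (f (-finv y)) := by rw [hf, hfinv.2 hy]
    _ = -finv y := hfinv.1 (hs _ (hfinv_maps hy))

/-- Here `Q(f, g) = ∫ f ∘ g⁻¹`, and `Q(g*, f*)` is written with `(f*)⁻¹ = (f⁻¹)*`. -/
theorem stmt5_general (f g finv ginv : ℝ → ℝ)
    (hf : IsHPM f) (hg : IsHPM g)
    (hfinv : ∀ t ∈ Set.Icc (-1:ℝ) 1, finv (f t) = t ∧ f (finv t) = t)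
    (hginv : ∀ t ∈ Set.Icc (-1:ℝ) 1, ginv (g t) = t ∧ g (ginv t) = t)
    (hfinvmaps : Set.MapsTo finv (Set.Icc (-1) 1) (Set.Icc (-1) 1))
    (hginvmaps : Set.MapsTo ginv (Set.Icc (-1) 1) (Set.Icc (-1) 1)) :
    (∫ t in (-1:ℝ)..1, g (finv t)) = -∫ t in (-1:ℝ)..1, f (ginv t) ∧
    (∫ t in (-1:ℝ)..1, f (ginv t)) = ∫ t in (-1:ℝ)..1, negConj g (negConj finv t) ∧
    (∫ t in (-1:ℝ)..1, f (finv t)) = 0 ∧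
    ((∀ t, f (-t) = -f t) → (∀ t, g (-t) = -g t) →
      (∫ t in (-1:ℝ)..1, f (ginv t)) = 0) := by
  obtain ⟨-, hf_mono, hf_maps, -, -⟩ := hf
  obtain ⟨-, hg_mono, hg_maps, -, -⟩ := hg
  have hfinv' : InvOn finv f (Icc (-1) 1) (Icc (-1) 1) :=
    ⟨fun t ht => (hfinv t ht).1, fun t ht => (hfinv t ht).2⟩
  have hginv' : RightInvOn ginv g (Icc (-1) 1) := fun t ht => (hginv t ht).2
  have antisymm_fg := intervalIntegral_comp_add_intervalIntegral_comp_of_invOn (by norm_num)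
    hf_mono.monotoneOn hg_mono hg_maps hf_maps hfinv' hginv' hfinvmaps hginvmaps
  have antisymm_ff := intervalIntegral_comp_add_intervalIntegral_comp_of_invOn (by norm_num)
    hf_mono.monotoneOn hf_mono hf_maps hf_maps hfinv' hfinv'.2 hfinvmaps hfinvmaps
  have conj : ∫ t in (-1:ℝ)..1, f (ginv t) = ∫ t in (-1:ℝ)..1, negConj g (negConj finv t) := by
    rw [intervalIntegral_negConj_comp_negConj]
    linarith
  refine ⟨by linarith, conj, by linarith, fun hf_odd hg_odd => ?_⟩
  have hg_self : negConj g = g := funext fun t => by simp [negConj, hg_odd]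
  have hfinv_self : EqOn (negConj finv) finv (uIcc (-1) 1) := fun t ht => by
    rw [uIcc_of_le (by norm_num)] at ht
    rw [negConj, hfinv'.apply_neg_of_odd hf_odd (fun x hx => neg_mem_Icc_iff.2 (by rwa [neg_neg]))
      hfinvmaps ht, neg_neg]
  have self_conj : ∫ t in (-1:ℝ)..1, negConj g (negConj finv t) = ∫ t in (-1:ℝ)..1, g (finv t) := by
    rw [hg_self]
    exact intervalIntegral.integral_congr fun t ht => congrArg g (hfinv_self ht)
  linarith

/-- For f, g ∈ G₀ with inverses finv, ginv, and Q(f,g) = ∫_{-1}^1 f(g⁻¹(t)) dt: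
Q(g,f) = -Q(f,g); Q(f,g) = Q(g*,f*) (note (f*)⁻¹ = (f⁻¹)*); Q(f,f) = 0; and
Q(f,g) = 0 whenever f and g are both odd. -/
theorem stmt5 (f g finv ginv : ℝ → ℝ)
    (hf : IsHPM f) (hg : IsHPM g)
    (hf0 : (∫ t in (-1:ℝ)..1, f t) = 0) (hg0 : (∫ t in (-1:ℝ)..1, g t) = 0)
    (hfinv : ∀ t ∈ Set.Icc (-1:ℝ) 1, finv (f t) = t ∧ f (finv t) = t)
    (hginv : ∀ t ∈ Set.Icc (-1:ℝ) 1, ginv (g t) = t ∧ g (ginv t) = t)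
    (hfinvmaps : Set.MapsTo finv (Set.Icc (-1) 1) (Set.Icc (-1) 1))
    (hginvmaps : Set.MapsTo ginv (Set.Icc (-1) 1) (Set.Icc (-1) 1)) :
    (∫ t in (-1:ℝ)..1, g (finv t)) = -∫ t in (-1:ℝ)..1, f (ginv t) ∧
    (∫ t in (-1:ℝ)..1, f (ginv t)) = ∫ t in (-1:ℝ)..1, negConj g (negConj finv t) ∧
    (∫ t in (-1:ℝ)..1, f (finv t)) = 0 ∧
    ((∀ t, f (-t) = -f t) → (∀ t, g (-t) = -g t) →
      (∫ t in (-1:ℝ)..1, f (ginv t)) = 0) :=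
  stmt5_general f g finv ginv hf hg hfinv hginv hfinvmaps hginvmaps
end

section
/- Q is affine in each variable: for f₁, f₂, g ∈ G and x ∈ [0,1], Q(x f₁ + (1-x) f₂, g) = x Q(f₁,g) + (1-x) Q(f₂,g), and similarly Q(f, x g₁ + (1-x) g₂) = x Q(f,g₁) + (1-x) Q(f,g₂) for g₁, g₂ ∈ G. -/
open Set MeasureTheory

lemma strictMonoOn_affine_comb {α : Type*} [Preorder α] {s : Set α} {g₁ g₂ : α → ℝ}
    {x : ℝ} (hx0 : 0 ≤ x) (hx1 : x ≤ 1) (hg₁ : StrictMonoOn g₁ s) (hg₂ : StrictMonoOn g₂ s) :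
    StrictMonoOn (fun t => x * g₁ t + (1 - x) * g₂ t) s := by
  intro p hp q hq hpq
  rcases hx0.eq_or_lt with rfl | hpos
  · simpa using hg₂ hp hq hpq
  · nlinarith [mul_lt_mul_of_pos_left (hg₁ hp hq hpq) hpos,
      mul_le_mul_of_nonneg_left (hg₂ hp hq hpq).le (sub_nonneg.2 hx1)]

section

variable {a b : ℝ} {G H : ℝ → ℝ}

lemma monotoneOn_of_lt_iff_left (hG : MapsTo G (Icc a b) (Icc a b))
    (hGH : ∀ t ∈ Icc a b, ∀ s ∈ Icc a b, s < G t ↔ H s < t) : MonotoneOn G (Icc a b) := by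
  intro t ht t' ht' htt'
  by_contra! hlt
  exact lt_irrefl _ ((hGH t' ht' _ (hG ht')).2 (((hGH t ht _ (hG ht')).1 hlt).trans_le htt'))

lemma monotoneOn_of_lt_iff_right (hH : MapsTo H (Icc a b) (Icc a b))
    (hGH : ∀ t ∈ Icc a b, ∀ s ∈ Icc a b, s < G t ↔ H s < t) : MonotoneOn H (Icc a b) := by
  intro s hs s' hs' hss'
  by_contra! hlt
  exact lt_irrefl _ ((hGH _ (hH hs) s hs).1 (hss'.trans_lt ((hGH _ (hH hs) s' hs').2 hlt)))

lemma volume_horizontal_slice_regionBetween (hG : MapsTo G (Icc a b) (Icc a b))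
    (hH : MapsTo H (Icc a b) (Icc a b))
    (hGH : ∀ t ∈ Icc a b, ∀ s ∈ Icc a b, s < G t ↔ H s < t) (s : ℝ) :
    volume ((fun t => (t, s)) ⁻¹' regionBetween (fun _ => a) G (Ioc a b)) =
      (Ioc a b).indicator (fun s => ENNReal.ofReal (b - H s)) s := by
  by_cases hs : s ∈ Ioc a b
  · have hs' := Ioc_subset_Icc_self hs
    have : (fun t => (t, s)) ⁻¹' regionBetween (fun _ => a) G (Ioc a b) = Ioc (H s) b := by
      ext t
      refine ⟨fun ⟨ht, _, hlt⟩ => ⟨(hGH t (Ioc_subset_Icc_self ht) s hs').1 hlt, ht.2⟩, ?_⟩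
      rintro ⟨hlt, htb⟩
      have ht : t ∈ Icc a b := ⟨(hH hs').1.trans hlt.le, htb⟩
      exact ⟨⟨(hH hs').1.trans_lt hlt, htb⟩, hs.1, (hGH t ht s hs').2 hlt⟩
    rw [this, Real.volume_Ioc, indicator_of_mem hs]
  · have : (fun t => (t, s)) ⁻¹' regionBetween (fun _ => a) G (Ioc a b) = ∅ := by
      ext t
      simp only [regionBetween, mem_preimage, mem_ofPred_eq, mem_Ioo, mem_empty_iff_false,
        iff_false]
      rintro ⟨ht, has, hlt⟩
      exact hs ⟨has, (hlt.trans_le (hG (Ioc_subset_Icc_self ht)).2).le⟩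
    rw [this, measure_empty, indicator_of_notMem hs]

theorem integral_add_integral_eq_sq_sub_sq_of_measurable (hab : a ≤ b) (hGm : Measurable G)
    (hG : MapsTo G (Icc a b) (Icc a b)) (hH : MapsTo H (Icc a b) (Icc a b))
    (hGH : ∀ t ∈ Icc a b, ∀ s ∈ Icc a b, s < G t ↔ H s < t) :
    (∫ t in a..b, G t) + ∫ s in a..b, H s = b ^ 2 - a ^ 2 := by
  have hc (c : ℝ) : IntegrableOn (fun _ => c) (Ioc a b) :=
    integrableOn_const measure_Ioc_lt_top.ne
  have hGi : IntegrableOn G (Ioc a b) :=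
    ((monotoneOn_of_lt_iff_left hG hGH).integrableOn_isCompact isCompact_Icc).mono_set
      Ioc_subset_Icc_self
  have hHi : IntegrableOn H (Ioc a b) :=
    ((monotoneOn_of_lt_iff_right hH hGH).integrableOn_isCompact isCompact_Icc).mono_set
      Ioc_subset_Icc_self
  set A := regionBetween (fun _ => a) G (Ioc a b)
  have by_columns : volume A = ENNReal.ofReal (∫ t in Ioc a b, (G t - a)) :=
    volume_regionBetween_eq_integral (hc a) hGi measurableSet_Ioc
      fun t ht => (hG (Ioc_subset_Icc_self ht)).1
  have by_rows : volume A = ENNReal.ofReal (∫ s in Ioc a b, (b - H s)) := by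
    rw [ofReal_integral_eq_lintegral_ofReal (f := fun s => b - H s) ((hc b).sub hHi)
      ((ae_restrict_iff' measurableSet_Ioc).2 (.of_forall fun s hs => sub_nonneg.2
        (hH (Ioc_subset_Icc_self hs)).2)), Measure.volume_eq_prod,
      Measure.prod_apply_symm
        (measurableSet_regionBetween measurable_const hGm measurableSet_Ioc),
      ← lintegral_indicator measurableSet_Ioc]
    exact congrArg _ (funext (volume_horizontal_slice_regionBetween hG hH hGH))
  have hcol : 0 ≤ ∫ t in Ioc a b, (G t - a) :=
    setIntegral_nonneg measurableSet_Ioc fun t ht => sub_nonneg.2 (hG (Ioc_subset_Icc_self ht)).1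
  have hrow : 0 ≤ ∫ s in Ioc a b, (b - H s) :=
    setIntegral_nonneg measurableSet_Ioc fun s hs => sub_nonneg.2 (hH (Ioc_subset_Icc_self hs)).2
  have key := (ENNReal.ofReal_eq_ofReal_iff hcol hrow).1 (by_columns.symm.trans by_rows)
  rw [integral_sub hGi (hc a), integral_sub (hc b) hHi, setIntegral_const, setIntegral_const,
    Real.volume_real_Ioc_of_le hab, smul_eq_mul, smul_eq_mul] at key
  rw [intervalIntegral.integral_of_le hab, intervalIntegral.integral_of_le hab]
  linear_combination key

theorem integral_add_integral_eq_sq_sub_sq (hab : a ≤ b) (hG : MapsTo G (Icc a b) (Icc a b))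
    (hH : MapsTo H (Icc a b) (Icc a b))
    (hGH : ∀ t ∈ Icc a b, ∀ s ∈ Icc a b, s < G t ↔ H s < t) :
    (∫ t in a..b, G t) + ∫ s in a..b, H s = b ^ 2 - a ^ 2 := by
  obtain ⟨G', hG'm, hGG'⟩ := (monotoneOn_of_lt_iff_left hG hGH).exists_monotone_extension
    (bddBelow_Icc.mono hG.image_subset) (bddAbove_Icc.mono hG.image_subset)
  rw [intervalIntegral.integral_congr (g := G') (by rwa [uIcc_of_le hab])]
  exact integral_add_integral_eq_sq_sub_sq_of_measurable hab hG'm.measurable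
    (fun t ht => hGG' ht ▸ hG ht) hH fun t ht => hGG' ht ▸ hGH t ht

theorem integral_comp_add_integral_comp_eq_sq_sub_sq (hab : a ≤ b) {f h finv hinv : ℝ → ℝ}
    (hf : StrictMonoOn f (Icc a b)) (hfI : MapsTo f (Icc a b) (Icc a b))
    (hh : StrictMonoOn h (Icc a b)) (hhI : MapsTo h (Icc a b) (Icc a b))
    (hfinv : RightInvOn finv f (Icc a b)) (hfinvI : MapsTo finv (Icc a b) (Icc a b))
    (hhinv : RightInvOn hinv h (Icc a b)) (hhinvI : MapsTo hinv (Icc a b) (Icc a b)) :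
    (∫ t in a..b, f (hinv t)) + ∫ s in a..b, h (finv s) = b ^ 2 - a ^ 2 := by
  refine integral_add_integral_eq_sq_sub_sq hab (hfI.comp hhinvI) (hhI.comp hfinvI) ?_
  intro t ht s hs
  calc s < f (hinv t) ↔ f (finv s) < f (hinv t) := by rw [hfinv hs]
    _ ↔ finv s < hinv t := hf.lt_iff_lt (hfinvI hs) (hhinvI ht)
    _ ↔ h (finv s) < h (hinv t) := (hh.lt_iff_lt (hfinvI hs) (hhinvI ht)).symm
    _ ↔ h (finv s) < t := by rw [hhinv ht]

lemma exists_rightInvOn_of_continuousOn (hab : a ≤ b) {f : ℝ → ℝ}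
    (hf : ContinuousOn f (Icc a b)) (ha : f a = a) (hb : f b = b) :
    ∃ finv, RightInvOn finv f (Icc a b) ∧ MapsTo finv (Icc a b) (Icc a b) := by
  have hsurj : SurjOn f (Icc a b) (Icc a b) := by
    have := intermediate_value_Icc hab hf
    rwa [ha, hb] at this
  exact ⟨_, hsurj.rightInvOn_invFunOn, hsurj.mapsTo_invFunOn⟩

lemma integral_affine_comb_comp (hab : a ≤ b) (x : ℝ) {φ₁ φ₂ ψ : ℝ → ℝ}
    (hφ₁ : MonotoneOn φ₁ (Icc a b)) (hφ₂ : MonotoneOn φ₂ (Icc a b))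
    (hψ : MonotoneOn ψ (Icc a b)) (hψI : MapsTo ψ (Icc a b) (Icc a b)) :
    ∫ t in a..b, (x * φ₁ (ψ t) + (1 - x) * φ₂ (ψ t))
      = x * (∫ t in a..b, φ₁ (ψ t)) + (1 - x) * ∫ t in a..b, φ₂ (ψ t) := by
  have hint {φ : ℝ → ℝ} (hφ : MonotoneOn φ (Icc a b)) :
      IntervalIntegrable (fun t => φ (ψ t)) volume a b :=
    MonotoneOn.intervalIntegrable (by rw [uIcc_of_le hab]; exact hφ.comp hψ hψI)
  rw [intervalIntegral.integral_add ((hint hφ₁).const_mul x) ((hint hφ₂).const_mul (1 - x)),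
    intervalIntegral.integral_const_mul, intervalIntegral.integral_const_mul]

end

/-- Q(f,g) = ∫_{-1}^1 f(g⁻¹) is affine in each variable: for x ∈ [0,1],
Q(x f₁ + (1-x) f₂, g) = x Q(f₁,g) + (1-x) Q(f₂,g) and
Q(f, x g₁ + (1-x) g₂) = x Q(f,g₁) + (1-x) Q(f,g₂). -/
theorem stmt7 (f f₁ f₂ g g₁ g₂ ginv g₁inv g₂inv gxinv : ℝ → ℝ) (x : ℝ)
    (hx : x ∈ Set.Icc (0:ℝ) 1)
    (hf : IsHPM f) (hf₁ : IsHPM f₁) (hf₂ : IsHPM f₂)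
    (hg : IsHPM g) (hg₁ : IsHPM g₁) (hg₂ : IsHPM g₂)
    (hginv : ∀ t ∈ Set.Icc (-1:ℝ) 1, ginv (g t) = t ∧ g (ginv t) = t)
    (hg₁inv : ∀ t ∈ Set.Icc (-1:ℝ) 1, g₁inv (g₁ t) = t ∧ g₁ (g₁inv t) = t)
    (hg₂inv : ∀ t ∈ Set.Icc (-1:ℝ) 1, g₂inv (g₂ t) = t ∧ g₂ (g₂inv t) = t)
    (hgxinv : ∀ t ∈ Set.Icc (-1:ℝ) 1,
      gxinv (x * g₁ t + (1 - x) * g₂ t) = t ∧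
        x * g₁ (gxinv t) + (1 - x) * g₂ (gxinv t) = t)
    (hginvmaps : Set.MapsTo ginv (Set.Icc (-1) 1) (Set.Icc (-1) 1))
    (hg₁invmaps : Set.MapsTo g₁inv (Set.Icc (-1) 1) (Set.Icc (-1) 1))
    (hg₂invmaps : Set.MapsTo g₂inv (Set.Icc (-1) 1) (Set.Icc (-1) 1))
    (hgxinvmaps : Set.MapsTo gxinv (Set.Icc (-1) 1) (Set.Icc (-1) 1)) :
    (∫ t in (-1:ℝ)..1, (x * f₁ (ginv t) + (1 - x) * f₂ (ginv t)))
        = x * (∫ t in (-1:ℝ)..1, f₁ (ginv t)) + (1 - x) * ∫ t in (-1:ℝ)..1, f₂ (ginv t) ∧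
    (∫ t in (-1:ℝ)..1, f (gxinv t))
        = x * (∫ t in (-1:ℝ)..1, f (g₁inv t)) + (1 - x) * ∫ t in (-1:ℝ)..1, f (g₂inv t) := by
  obtain ⟨hx0, hx1⟩ := hx
  have hI : (-1 : ℝ) ≤ 1 := by norm_num
  constructor
  · exact integral_affine_comb_comp hI x hf₁.2.1.monotoneOn hf₂.2.1.monotoneOn
      (Function.monotoneOn_of_rightInvOn_of_mapsTo hg.2.1.monotoneOn (fun t ht => (hginv t ht).2)
        hginvmaps) hginvmaps
  · obtain ⟨finv, hfinv, hfinvI⟩ :=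
      exists_rightInvOn_of_continuousOn hI hf.1 hf.2.2.2.1 hf.2.2.2.2
    have area_identity {h hinv : ℝ → ℝ} (hh : StrictMonoOn h (Icc (-1) 1))
        (hhI : MapsTo h (Icc (-1) 1) (Icc (-1) 1)) (hhinv : RightInvOn hinv h (Icc (-1) 1))
        (hhinvI : MapsTo hinv (Icc (-1) 1) (Icc (-1) 1)) :=
      integral_comp_add_integral_comp_eq_sq_sub_sq hI hf.2.1 hf.2.2.1 hh hhI hfinv hfinvI hhinv
        hhinvI
    have hgxI : MapsTo (fun t => x * g₁ t + (1 - x) * g₂ t) (Icc (-1) 1) (Icc (-1) 1) :=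
      fun t ht => convex_Icc (-1 : ℝ) 1 (hg₁.2.2.1 ht) (hg₂.2.2.1 ht) hx0 (sub_nonneg.2 hx1)
        (add_sub_cancel x 1)
    have hgx := area_identity (strictMonoOn_affine_comb hx0 hx1 hg₁.2.1 hg₂.2.1) hgxI
      (fun t ht => (hgxinv t ht).2) hgxinvmaps
    have hg₁' := area_identity hg₁.2.1 hg₁.2.2.1 (fun t ht => (hg₁inv t ht).2) hg₁invmaps
    have hg₂' := area_identity hg₂.2.1 hg₂.2.2.1 (fun t ht => (hg₂inv t ht).2) hg₂invmaps
    have hlin := integral_affine_comb_comp hI x hg₁.2.1.monotoneOn hg₂.2.1.monotoneOn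
      (Function.monotoneOn_of_rightInvOn_of_mapsTo hf.2.1.monotoneOn hfinv hfinvI) hfinvI
    linear_combination hgx - hlin - x * hg₁' - (1 - x) * hg₂'
end

section
/- An element f ∈ Ḡ can be written as f = f₁ ⊙ f₂ for some f₁, f₂ ∈ Ḡ if and only if f(0) = 0. Moreover f ∈ Ḡ is odd if and only if there exists f₁ ∈ Ḡ with f = f₁ ⊙ f₁*. -/
/-- An element of Ḡ: a continuous nondecreasing surjection of [-1,1] onto itself
fixing ±1. -/
def IsGbar (f : ℝ → ℝ) : Prop :=
  ContinuousOn f (Set.Icc (-1) 1) ∧ MonotoneOn f (Set.Icc (-1) 1) ∧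
    Set.MapsTo f (Set.Icc (-1) 1) (Set.Icc (-1) 1) ∧
    Set.SurjOn f (Set.Icc (-1) 1) (Set.Icc (-1) 1) ∧ f (-1) = -1 ∧ f 1 = 1

/-- The concatenation f₁ ⊙ f₂. -/
noncomputable def odot (f₁ f₂ : ℝ → ℝ) : ℝ → ℝ := fun t =>
  if t ≤ 0 then (f₁ (2 * t + 1) - 1) / 2 else (f₂ (2 * t - 1) + 1) / 2

lemma leftGbar {f : ℝ → ℝ} (hf : IsGbar f) (h0 : f 0 = 0) :
    IsGbar (fun s => 2 * f ((s - 1) / 2) + 1) := by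
  obtain ⟨hc, hm, hmap, hsurj, hm1, hp1⟩ := hf
  have hsub : Set.Icc (-1:ℝ) 0 ⊆ Set.Icc (-1:ℝ) 1 :=
    Set.Icc_subset_Icc_right (by norm_num)
  have hmem : ∀ s ∈ Set.Icc (-1:ℝ) 1, (s - 1) / 2 ∈ Set.Icc (-1:ℝ) 0 := by
    intro s hs
    exact ⟨by linarith [hs.1], by linarith [hs.2]⟩
  have key : ∀ s ∈ Set.Icc (-1:ℝ) 1, f ((s - 1) / 2) ∈ Set.Icc (-1:ℝ) 0 := by
    intro s hs
    have h := hmem s hs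
    constructor
    · rw [← hm1]
      exact hm (by norm_num) (hsub h) h.1
    · rw [← h0]
      exact hm (hsub h) (by norm_num) h.2
  refine ⟨?_, ?_, ?_, ?_, ?_, ?_⟩
  · exact (continuousOn_const.mul
      (hc.comp (Continuous.continuousOn (by continuity))
        (fun s hs => hsub (hmem s hs)))).add continuousOn_const
  · intro a ha b hb hab
    have := hm (hsub (hmem a ha)) (hsub (hmem b hb)) (by linarith)
    simp only
    linarith
  · intro s hs
    have := key s hs
    exact ⟨by linarith [this.1], by linarith [this.2]⟩
  · intro y hy
    have hy' : (y - 1) / 2 ∈ Set.Icc (f (-1)) (f 0) := by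
      rw [hm1, h0]
      exact ⟨by linarith [hy.1], by linarith [hy.2]⟩
    obtain ⟨x, hx, hfx⟩ :=
      intermediate_value_Icc (by norm_num : (-1:ℝ) ≤ 0) (hc.mono hsub) hy'
    refine ⟨2 * x + 1, ⟨by linarith [hx.1], by linarith [hx.2]⟩, ?_⟩
    have e : (2 * x + 1 - 1) / 2 = x := by ring
    simp only [e, hfx]
    ring
  · have e : ((-1:ℝ) - 1) / 2 = -1 := by norm_num
    simp only [e, hm1]
    norm_num
  · have e : ((1:ℝ) - 1) / 2 = 0 := by norm_num
    simp only [e, h0]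
    norm_num

lemma rightGbar {f : ℝ → ℝ} (hf : IsGbar f) (h0 : f 0 = 0) :
    IsGbar (fun s => 2 * f ((s + 1) / 2) - 1) := by
  obtain ⟨hc, hm, hmap, hsurj, hm1, hp1⟩ := hf
  have hsub : Set.Icc (0:ℝ) 1 ⊆ Set.Icc (-1:ℝ) 1 :=
    Set.Icc_subset_Icc_left (by norm_num)
  have hmem : ∀ s ∈ Set.Icc (-1:ℝ) 1, (s + 1) / 2 ∈ Set.Icc (0:ℝ) 1 := by
    intro s hs
    exact ⟨by linarith [hs.1], by linarith [hs.2]⟩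
  have key : ∀ s ∈ Set.Icc (-1:ℝ) 1, f ((s + 1) / 2) ∈ Set.Icc (0:ℝ) 1 := by
    intro s hs
    have h := hmem s hs
    constructor
    · rw [← h0]
      exact hm (by norm_num) (hsub h) h.1
    · have := hm (hsub h) (by norm_num : (1:ℝ) ∈ Set.Icc (-1:ℝ) 1) h.2
      rw [hp1] at this
      exact this
  refine ⟨?_, ?_, ?_, ?_, ?_, ?_⟩
  · exact (continuousOn_const.mul
      (hc.comp (Continuous.continuousOn (by continuity))
        (fun s hs => hsub (hmem s hs)))).sub continuousOn_const
  · intro a ha b hb hab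
    have := hm (hsub (hmem a ha)) (hsub (hmem b hb)) (by linarith)
    simp only
    linarith
  · intro s hs
    have := key s hs
    exact ⟨by linarith [this.1], by linarith [this.2]⟩
  · intro y hy
    have hy' : (y + 1) / 2 ∈ Set.Icc (f 0) (f 1) := by
      rw [hp1, h0]
      exact ⟨by linarith [hy.1], by linarith [hy.2]⟩
    obtain ⟨x, hx, hfx⟩ :=
      intermediate_value_Icc (by norm_num : (0:ℝ) ≤ 1) (hc.mono hsub) hy'
    refine ⟨2 * x - 1, ⟨by linarith [hx.1], by linarith [hx.2]⟩, ?_⟩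
    have e : (2 * x - 1 + 1) / 2 = x := by ring
    simp only [e, hfx]
    ring
  · have e : ((-1:ℝ) + 1) / 2 = 0 := by norm_num
    simp only [e, h0]
    norm_num
  · have e : ((1:ℝ) + 1) / 2 = 1 := by norm_num
    simp only [e, hp1]
    norm_num

/-- f ∈ Ḡ is a concatenation f₁ ⊙ f₂ iff f(0) = 0, and f is odd iff f = f₁ ⊙ f₁*
for some f₁ ∈ Ḡ. -/
theorem stmt10 (f : ℝ → ℝ) (hf : IsGbar f) :
    ((∃ f₁ f₂, IsGbar f₁ ∧ IsGbar f₂ ∧ ∀ t ∈ Set.Icc (-1:ℝ) 1, f t = odot f₁ f₂ t) ↔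
      f 0 = 0) ∧
    ((∀ t ∈ Set.Icc (-1:ℝ) 1, f (-t) = -f t) ↔
      ∃ f₁, IsGbar f₁ ∧ ∀ t ∈ Set.Icc (-1:ℝ) 1, f t = odot f₁ (negConj f₁) t) := by
  constructor
  · constructor
    · rintro ⟨f₁, f₂, h1, h2, heq⟩
      have h := heq 0 ⟨by norm_num, by norm_num⟩
      rw [h]
      simp only [odot, if_pos (le_refl (0:ℝ))]
      norm_num [h1.2.2.2.2.2]
    · intro h0
      refine ⟨_, _, leftGbar hf h0, rightGbar hf h0, fun t ht => ?_⟩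
      simp only [odot]
      split_ifs with h
      · have e : (2 * t + 1 - 1) / 2 = t := by ring
        rw [e]
        ring
      · have e : (2 * t - 1 + 1) / 2 = t := by ring
        rw [e]
        ring
  · constructor
    · intro hodd
      have h0 : f 0 = 0 := by
        have := hodd 0 ⟨by norm_num, by norm_num⟩
        simp at this
        linarith
      refine ⟨fun s => 2 * f ((s - 1) / 2) + 1, leftGbar hf h0, fun t ht => ?_⟩
      simp only [odot, negConj]
      split_ifs with h
      · have e : (2 * t + 1 - 1) / 2 = t := by ring
        rw [e]
        ring
      · have e : (-(2 * t - 1) - 1) / 2 = -t := by ring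
        rw [e, hodd t ht]
        ring
    · rintro ⟨f₁, h1, heq⟩
      intro t ht
      have hmt : -t ∈ Set.Icc (-1:ℝ) 1 := ⟨by linarith [ht.2], by linarith [ht.1]⟩
      rw [heq t ht, heq (-t) hmt]
      simp only [odot, negConj]
      rcases lt_trichotomy t 0 with h | h | h
      · rw [if_neg (by linarith : ¬ -t ≤ 0), if_pos (le_of_lt h)]
        have e : -(2 * -t - 1) = 2 * t + 1 := by ring
        rw [e]
        ring
      · subst h
        norm_num [h1.2.2.2.2.2]
      · rw [if_pos (by linarith : -t ≤ 0), if_neg (not_le.mpr h)]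
        have e : -(2 * t - 1) = 2 * -t + 1 := by ring
        rw [e]
        ring
end

section
/- For f₁, f₂, g₁, g₂ ∈ G, Q(f₁⊙f₂, g₁⊙g₂) = (1/4)[Q(f₁,g₁) + Q(f₂,g₂)]. -/
lemma inv_monotoneOn {g ginv : ℝ → ℝ} (hg : IsHPM g)
    (hinv : ∀ t ∈ Set.Icc (-1:ℝ) 1, ginv (g t) = t ∧ g (ginv t) = t)
    (hmaps : Set.MapsTo ginv (Set.Icc (-1) 1) (Set.Icc (-1) 1)) :
    MonotoneOn ginv (Set.Icc (-1:ℝ) 1) := by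
  intro s hs t ht hst
  by_contra hlt
  push_neg at hlt
  have h1 : g (ginv t) < g (ginv s) := hg.2.1 (hmaps ht) (hmaps hs) hlt
  rw [(hinv t ht).2, (hinv s hs).2] at h1
  exact absurd hst (not_le.mpr h1)

/-- For f₁, f₂, g₁, g₂ ∈ G, Q(f₁⊙f₂, g₁⊙g₂) = (1/4)[Q(f₁,g₁) + Q(f₂,g₂)], where
Q(f,g) = ∫_{-1}^1 f(g⁻¹(t)) dt and (g₁⊙g₂)⁻¹ = g₁⁻¹ ⊙ g₂⁻¹. -/
theorem stmt11 (f₁ f₂ g₁ g₂ g₁inv g₂inv : ℝ → ℝ)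
    (hf₁ : IsHPM f₁) (hf₂ : IsHPM f₂) (hg₁ : IsHPM g₁) (hg₂ : IsHPM g₂)
    (hg₁inv : ∀ t ∈ Set.Icc (-1:ℝ) 1, g₁inv (g₁ t) = t ∧ g₁ (g₁inv t) = t)
    (hg₂inv : ∀ t ∈ Set.Icc (-1:ℝ) 1, g₂inv (g₂ t) = t ∧ g₂ (g₂inv t) = t)
    (hg₁invmaps : Set.MapsTo g₁inv (Set.Icc (-1) 1) (Set.Icc (-1) 1))
    (hg₂invmaps : Set.MapsTo g₂inv (Set.Icc (-1) 1) (Set.Icc (-1) 1)) :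
    (∫ t in (-1:ℝ)..1, odot f₁ f₂ (odot g₁inv g₂inv t))
      = (1 / 4) * ((∫ t in (-1:ℝ)..1, f₁ (g₁inv t)) + ∫ t in (-1:ℝ)..1, f₂ (g₂inv t)) := by
  have hI : ((-1:ℝ)) ≤ 1 := by norm_num
  have huIcc : Set.uIcc (-1:ℝ) 1 = Set.Icc (-1:ℝ) 1 := Set.uIcc_of_le hI
  -- monotone compositions
  have hm₁ : MonotoneOn (fun s => f₁ (g₁inv s)) (Set.Icc (-1:ℝ) 1) := by
    intro s hs t ht hst
    exact hf₁.2.1.monotoneOn (hg₁invmaps hs) (hg₁invmaps ht)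
      (inv_monotoneOn hg₁ hg₁inv hg₁invmaps hs ht hst)
  have hm₂ : MonotoneOn (fun s => f₂ (g₂inv s)) (Set.Icc (-1:ℝ) 1) := by
    intro s hs t ht hst
    exact hf₂.2.1.monotoneOn (hg₂invmaps hs) (hg₂invmaps ht)
      (inv_monotoneOn hg₂ hg₂inv hg₂invmaps hs ht hst)
  have hint₁ : IntervalIntegrable (fun s => f₁ (g₁inv s)) MeasureTheory.volume (-1) 1 := by
    apply MonotoneOn.intervalIntegrable; rwa [huIcc]
  have hint₂ : IntervalIntegrable (fun s => f₂ (g₂inv s)) MeasureTheory.volume (-1) 1 := by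
    apply MonotoneOn.intervalIntegrable; rwa [huIcc]
  set F₁ : ℝ → ℝ := fun s => f₁ (g₁inv s) / 2 - 1 / 2 with hF₁def
  set F₂ : ℝ → ℝ := fun s => f₂ (g₂inv s) / 2 + 1 / 2 with hF₂def
  set h : ℝ → ℝ := fun t => odot f₁ f₂ (odot g₁inv g₂inv t) with hhdef
  -- value of the integrand on [-1,0]
  have e₁ : Set.EqOn h (fun t => F₁ (2 * t + 1)) (Set.uIcc (-1:ℝ) 0) := by
    intro t ht
    rw [Set.uIcc_of_le (by norm_num : (-1:ℝ) ≤ 0)] at ht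
    obtain ⟨ht1, ht2⟩ := ht
    have h2t : (2 * t + 1) ∈ Set.Icc (-1:ℝ) 1 := by constructor <;> linarith
    have hx := hg₁invmaps h2t
    have hg_eq : odot g₁inv g₂inv t = (g₁inv (2 * t + 1) - 1) / 2 := by
      simp only [odot, if_pos ht2]
    have hxle : (g₁inv (2 * t + 1) - 1) / 2 ≤ 0 := by
      have := hx.2; linarith
    show odot f₁ f₂ (odot g₁inv g₂inv t) = F₁ (2 * t + 1)
    rw [hg_eq]
    simp only [odot, if_pos hxle, F₁]
    have : 2 * ((g₁inv (2 * t + 1) - 1) / 2) + 1 = g₁inv (2 * t + 1) := by ring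
    rw [this]; ring
  -- value of the integrand on [0,1]
  have e₂ : Set.EqOn h (fun t => F₂ (2 * t - 1)) (Set.uIcc (0:ℝ) 1) := by
    intro t ht
    rw [Set.uIcc_of_le (by norm_num : (0:ℝ) ≤ 1)] at ht
    obtain ⟨ht1, ht2⟩ := ht
    have h2t : (2 * t - 1) ∈ Set.Icc (-1:ℝ) 1 := by constructor <;> linarith
    have hx := hg₂invmaps h2t
    show odot f₁ f₂ (odot g₁inv g₂inv t) = F₂ (2 * t - 1)
    rcases lt_or_eq_of_le ht1 with htpos | htzero
    · -- t > 0
      have hg_eq : odot g₁inv g₂inv t = (g₂inv (2 * t - 1) + 1) / 2 := by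
        simp only [odot, if_neg (not_le.mpr htpos)]
      rw [hg_eq]
      rcases le_or_gt ((g₂inv (2 * t - 1) + 1) / 2) 0 with hxle | hxgt
      · -- then g₂inv (2t-1) = -1
        have hgeq : g₂inv (2 * t - 1) = -1 := le_antisymm (by linarith) hx.1
        simp only [odot, if_pos hxle, hgeq, F₂]
        have : 2 * ((-1 + 1) / 2:ℝ) + 1 = 1 := by ring
        rw [this, hf₁.2.2.2.2, hf₂.2.2.2.1]; norm_num
      · simp only [odot, if_neg (not_le.mpr hxgt), F₂]
        have : 2 * ((g₂inv (2 * t - 1) + 1) / 2) - 1 = g₂inv (2 * t - 1) := by ring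
        rw [this]; ring
    · -- t = 0
      subst htzero
      have h1mem : (1:ℝ) ∈ Set.Icc (-1:ℝ) 1 := by constructor <;> norm_num
      have hneg1mem : (-1:ℝ) ∈ Set.Icc (-1:ℝ) 1 := by constructor <;> norm_num
      have hg1inv1 : g₁inv 1 = 1 := by
        have := (hg₁inv 1 h1mem).1
        rwa [hg₁.2.2.2.2] at this
      have hg2invm1 : g₂inv (-1) = -1 := by
        have := (hg₂inv (-1) hneg1mem).1
        rwa [hg₂.2.2.2.1] at this
      simp only [odot, F₂]
      norm_num [hg1inv1, hg2invm1, hf₁.2.2.2.2, hf₂.2.2.2.1]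
  -- integrability of h on the two pieces
  have hintF₁ : IntervalIntegrable (fun t => F₁ (2 * t + 1)) MeasureTheory.volume (-1) 0 := by
    apply MonotoneOn.intervalIntegrable
    rw [Set.uIcc_of_le (by norm_num : (-1:ℝ) ≤ 0)]
    intro s hs t ht hst
    have hs' : (2 * s + 1) ∈ Set.Icc (-1:ℝ) 1 := by
      obtain ⟨a, b⟩ := hs; constructor <;> linarith
    have ht' : (2 * t + 1) ∈ Set.Icc (-1:ℝ) 1 := by
      obtain ⟨a, b⟩ := ht; constructor <;> linarith
    have := hm₁ hs' ht' (by linarith)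
    simp only [F₁]; dsimp only at this ⊢; linarith
  have hintF₂ : IntervalIntegrable (fun t => F₂ (2 * t - 1)) MeasureTheory.volume 0 1 := by
    apply MonotoneOn.intervalIntegrable
    rw [Set.uIcc_of_le (by norm_num : (0:ℝ) ≤ 1)]
    intro s hs t ht hst
    have hs' : (2 * s - 1) ∈ Set.Icc (-1:ℝ) 1 := by
      obtain ⟨a, b⟩ := hs; constructor <;> linarith
    have ht' : (2 * t - 1) ∈ Set.Icc (-1:ℝ) 1 := by
      obtain ⟨a, b⟩ := ht; constructor <;> linarith
    have := hm₂ hs' ht' (by linarith)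
    simp only [F₂]; dsimp only at this ⊢; linarith
  have hinth₁ : IntervalIntegrable h MeasureTheory.volume (-1) 0 := by
    rw [intervalIntegrable_iff] at hintF₁ ⊢
    exact hintF₁.congr_fun (fun x hx => (e₁ (Set.uIoc_subset_uIcc hx)).symm) measurableSet_uIoc
  have hinth₂ : IntervalIntegrable h MeasureTheory.volume 0 1 := by
    rw [intervalIntegrable_iff] at hintF₂ ⊢
    exact hintF₂.congr_fun (fun x hx => (e₂ (Set.uIoc_subset_uIcc hx)).symm) measurableSet_uIoc
  -- split
  have hsplit : (∫ t in (-1:ℝ)..1, h t)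
      = (∫ t in (-1:ℝ)..0, h t) + ∫ t in (0:ℝ)..1, h t :=
    (intervalIntegral.integral_add_adjacent_intervals hinth₁ hinth₂).symm
  -- compute the two pieces via the substitution s = 2t ± 1
  have hleft : (∫ t in (-1:ℝ)..0, h t) = (2:ℝ)⁻¹ * ∫ s in (-1:ℝ)..1, F₁ s := by
    rw [intervalIntegral.integral_congr e₁,
      intervalIntegral.integral_comp_mul_add F₁ (two_ne_zero) 1]
    norm_num
  have hright : (∫ t in (0:ℝ)..1, h t) = (2:ℝ)⁻¹ * ∫ s in (-1:ℝ)..1, F₂ s := by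
    rw [intervalIntegral.integral_congr e₂,
      intervalIntegral.integral_comp_mul_sub F₂ (two_ne_zero) 1]
    norm_num
  have hc : IntervalIntegrable (fun _ : ℝ => (1:ℝ)/2) MeasureTheory.volume (-1) 1 :=
    intervalIntegrable_const
  have hFint₁ : (∫ s in (-1:ℝ)..1, F₁ s)
      = (∫ s in (-1:ℝ)..1, f₁ (g₁inv s)) / 2 - 1 := by
    simp only [hF₁def]
    rw [intervalIntegral.integral_sub (hint₁.div_const 2) hc,
      intervalIntegral.integral_div, intervalIntegral.integral_const]
    norm_num
  have hFint₂ : (∫ s in (-1:ℝ)..1, F₂ s)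
      = (∫ s in (-1:ℝ)..1, f₂ (g₂inv s)) / 2 + 1 := by
    simp only [hF₂def]
    rw [intervalIntegral.integral_add (hint₂.div_const 2) hc,
      intervalIntegral.integral_div, intervalIntegral.integral_const]
    norm_num
  show (∫ t in (-1:ℝ)..1, h t) = _
  rw [hsplit, hleft, hright, hFint₁, hFint₂]
  ring
end

section
/- Let (T,U) be a universal tournament, S ⊆ T finite, and J ⊆ S. Let T_J be the set of vertices i ∈ T \ S with i → j in U for all j ∈ J and j → i for all j ∈ S \ J. Then the restriction of U to T_J is itself a universal tournament. -/
/-- A tournament: an irreflexive relation with exactly one of R i j, R j i for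
distinct i, j. -/
def IsTournament {α : Type*} (R : α → α → Prop) : Prop :=
  (∀ i, ¬R i i) ∧ ∀ i j, i ≠ j → (R i j ↔ ¬R j i)

/-- The finite set T₀ satisfies the simple extension property in R. -/
def SimpleExt {α : Type*} (R : α → α → Prop) (T₀ : Finset α) : Prop :=
  ∀ J ⊆ T₀, ∃ v, (∀ j ∈ J, R v j) ∧ ∀ j ∈ T₀, j ∉ J → R j v

/-- If (T,U) is universal, S ⊆ T finite, J ⊆ S, and T_J is the set of vertices
outside S that beat every j ∈ J and lose to every j ∈ S \ J, then the restriction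
of U to T_J is itself universal: every finite T₀ ⊆ T_J satisfies the simple
extension property within T_J. -/
theorem stmt19 {T : Type*} (U : T → T → Prop) (hU : IsTournament U)
    (huniv : ∀ T₀ : Finset T, SimpleExt U T₀)
    (S J : Finset T) (hJ : J ⊆ S) :
    ∀ T₀ : Finset T,
      (↑T₀ ⊆ {i : T | i ∉ S ∧ (∀ j ∈ J, U i j) ∧ ∀ j ∈ S, j ∉ J → U j i}) →
      ∀ K ⊆ T₀,
        ∃ v, (v ∉ S ∧ (∀ j ∈ J, U v j) ∧ ∀ j ∈ S, j ∉ J → U j v) ∧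
          (∀ k ∈ K, U v k) ∧ ∀ k ∈ T₀, k ∉ K → U k v := by
  classical
  intro T₀ hT₀ K hK
  obtain ⟨v, hv1, hv2⟩ := huniv (S ∪ T₀) (J ∪ K)
    (Finset.union_subset (hJ.trans Finset.subset_union_left)
      (hK.trans Finset.subset_union_right))
  have hKnS : ∀ k ∈ K, k ∉ S := fun k hk => (hT₀ (hK hk)).1
  have hvS : v ∉ S := by
    intro hvS
    by_cases hvJ : v ∈ J
    · exact hU.1 v (hv1 v (Finset.mem_union_left _ hvJ))
    · refine hU.1 v (hv2 v (Finset.mem_union_left _ hvS) ?_)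
      simp only [Finset.mem_union, not_or]
      exact ⟨hvJ, fun hvK => hKnS v hvK hvS⟩
  refine ⟨v, ⟨hvS, fun j hj => hv1 j (Finset.mem_union_left _ hj),
    fun j hj hjJ => hv2 j (Finset.mem_union_left _ hj) ?_⟩,
    fun k hk => hv1 k (Finset.mem_union_right _ hk),
    fun k hk hkK => hv2 k (Finset.mem_union_right _ hk) ?_⟩
  · simp only [Finset.mem_union, not_or]
    exact ⟨hjJ, fun hjK => hKnS j hjK hj⟩
  · simp only [Finset.mem_union, not_or]
    exact ⟨fun hkJ => (hT₀ hk).1 (hJ hkJ), hkK⟩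
end
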